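/- Let 0 < ν₁ ≤ ν₂, let z_i ≤ z_j be positive reals and a_p ≤ a_q be positive reals. Define h(z, ν, a) = a·λ*(z,ν,a)/(1 + a·λ*(z,ν,a)) with λ*(z,ν,a) = −1/(2a) + (1/2)√(1/a² + 4/(ν a z)). Then h(z_i, ν₁, a_p)·h(z_j, ν₁, a_q) ≥ h(z_j, ν₂, a_p)·h(z_i, ν₂, a_q). -/
import Mathlib


/-- The closed-form relay power allocation coefficient (eq. (25)). -/
noncomputable def lamStar (z ν a : ℝ) : ℝ :=
  -1 / (2 * a) + (1 / 2) * Real.sqrt (1 / a ^ 2 + 4 / (ν * a * z))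

/-- The effective link gain `h(z,ν,a) = aλ*/(1+aλ*)`. -/
noncomputable def hFun (z ν a : ℝ) : ℝ :=
  a * lamStar z ν a / (1 + a * lamStar z ν a)

/-- Auxiliary: the gain as a function of `t = 4a/(νz)`. -/
noncomputable def gFun (t : ℝ) : ℝ :=
  (Real.sqrt (1 + t) - 1) / (Real.sqrt (1 + t) + 1)

lemma one_le_sqrt_one_add {t : ℝ} (ht : 0 ≤ t) : 1 ≤ Real.sqrt (1 + t) := by
  have h1 : (1 : ℝ) = Real.sqrt 1 := (Real.sqrt_one).symm
  rw [h1]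
  exact Real.sqrt_le_sqrt (by linarith)

lemma gFun_nonneg {t : ℝ} (ht : 0 ≤ t) : 0 ≤ gFun t := by
  have hs := one_le_sqrt_one_add ht
  unfold gFun
  apply div_nonneg <;> linarith

lemma gFun_mono {t t' : ℝ} (ht : 0 ≤ t) (htt : t ≤ t') : gFun t ≤ gFun t' := by
  have hs := one_le_sqrt_one_add ht
  have hs' := one_le_sqrt_one_add (le_trans ht htt)
  have hle : Real.sqrt (1 + t) ≤ Real.sqrt (1 + t') :=
    Real.sqrt_le_sqrt (by linarith)
  unfold gFun
  rw [div_le_div_iff₀ (by linarith) (by linarith)]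
  nlinarith

lemma hFun_eq (z ν a : ℝ) (hz : 0 < z) (hν : 0 < ν) (ha : 0 < a) :
    hFun z ν a = gFun (4 * a / (ν * z)) := by
  have ht : 0 ≤ 4 * a / (ν * z) := by positivity
  set s := Real.sqrt (1 + 4 * a / (ν * z)) with hsdef
  have hs1 : 1 ≤ s := one_le_sqrt_one_add ht
  have hkey : a * lamStar z ν a = (s - 1) / 2 := by
    unfold lamStar
    have harg : 1 / a ^ 2 + 4 / (ν * a * z) = (1 + 4 * a / (ν * z)) / a ^ 2 := by
      field_simp
    rw [harg, Real.sqrt_div (by positivity) _, Real.sqrt_sq ha.le, ← hsdef]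
    field_simp
    ring
  unfold hFun gFun
  rw [hkey, ← hsdef]
  rw [show (1 : ℝ) + (s - 1) / 2 = (s + 1) / 2 by ring]
  have hne : s + 1 ≠ 0 := by linarith
  field_simp

lemma le_of_sq_le' {x y : ℝ} (hx : 0 ≤ x) (hy : 0 ≤ y) (h : x ^ 2 ≤ y ^ 2) : x ≤ y := by
  nlinarith

set_option maxHeartbeats 1000000 in
/-- Key algebraic lemma: fixed product, nested pairs. -/
lemma key_lemma (t1 t2 t3 t4 : ℝ) (h2 : 0 < t2) (h21 : t2 ≤ t1) (h24 : t2 ≤ t4)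
    (h3 : 0 < t3) (hprod : t1 * t4 = t2 * t3) :
    gFun t2 * gFun t3 ≤ gFun t1 * gFun t4 := by
  have h1 : 0 < t1 := lt_of_lt_of_le h2 h21
  have h4 : 0 < t4 := lt_of_lt_of_le h2 h24
  set s1 := Real.sqrt (1 + t1) with hs1def
  set s2 := Real.sqrt (1 + t2) with hs2def
  set s3 := Real.sqrt (1 + t3) with hs3def
  set s4 := Real.sqrt (1 + t4) with hs4def
  have e1 : s1 ^ 2 = 1 + t1 := Real.sq_sqrt (by linarith)
  have e2 : s2 ^ 2 = 1 + t2 := Real.sq_sqrt (by linarith)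
  have e3 : s3 ^ 2 = 1 + t3 := Real.sq_sqrt (by linarith)
  have e4 : s4 ^ 2 = 1 + t4 := Real.sq_sqrt (by linarith)
  have g1 : 1 ≤ s1 := one_le_sqrt_one_add h1.le
  have g2 : 1 ≤ s2 := one_le_sqrt_one_add h2.le
  have g3 : 1 ≤ s3 := one_le_sqrt_one_add h3.le
  have g4 : 1 ≤ s4 := one_le_sqrt_one_add h4.le
  -- sum inequality
  have hsum : t1 + t4 ≤ t2 + t3 := by
    have hx : 0 ≤ (t1 - t2) * (t4 - t2) := mul_nonneg (by linarith) (by linarith)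
    nlinarith [hx]
  have p1 : (0:ℝ) < s1 := by linarith
  have p2 : (0:ℝ) < s2 := by linarith
  have p3 : (0:ℝ) < s3 := by linarith
  have p4 : (0:ℝ) < s4 := by linarith
  have pA : 0 < s1 * s4 := mul_pos p1 p4
  have pC : 0 < s2 * s3 := mul_pos p2 p3
  have qA : (s1 * s4) ^ 2 = (1 + t1) * (1 + t4) := by rw [mul_pow, e1, e4]
  have qC : (s2 * s3) ^ 2 = (1 + t2) * (1 + t3) := by rw [mul_pow, e2, e3]
  have hCA : s1 * s4 ≤ s2 * s3 := by
    refine le_of_sq_le' pA.le pC.le ?_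
    rw [qA, qC]; nlinarith [hsum, hprod]
  have hDB : s1 + s4 ≤ s2 + s3 := by
    refine le_of_sq_le' (by linarith) (by linarith) ?_
    nlinarith [e1, e2, e3, e4, hsum, hCA]
  have hE1 : (s1 * s4 + 1) ^ 2 = (s1 + s4) ^ 2 + t1 * t4 := by
    have hid : (s1 * s4 + 1) ^ 2 - (s1 + s4) ^ 2 = (s1 ^ 2 - 1) * (s4 ^ 2 - 1) := by ring
    nlinarith [hid, e1, e4]
  have hE2 : (s2 * s3 + 1) ^ 2 = (s2 + s3) ^ 2 + t1 * t4 := by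
    have hid : (s2 * s3 + 1) ^ 2 - (s2 + s3) ^ 2 = (s2 ^ 2 - 1) * (s3 ^ 2 - 1) := by ring
    nlinarith [hid, e2, e3, hprod]
  have hposE : 0 < t1 * t4 := mul_pos h1 h4
  have hkey : (s2 * s3 + 1) * (s1 + s4) ≤ (s1 * s4 + 1) * (s2 + s3) := by
    have hsq : ((s2 * s3 + 1) * (s1 + s4)) ^ 2 ≤ ((s1 * s4 + 1) * (s2 + s3)) ^ 2 := by
      have hBD2 : (s1 + s4) ^ 2 ≤ (s2 + s3) ^ 2 := by
        have := mul_nonneg (sub_nonneg.mpr hDB) (by linarith : (0:ℝ) ≤ s2 + s3 + (s1 + s4))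
        nlinarith [this]
      have hdiff : ((s1 * s4 + 1) * (s2 + s3)) ^ 2 - ((s2 * s3 + 1) * (s1 + s4)) ^ 2
          = t1 * t4 * ((s2 + s3) ^ 2 - (s1 + s4) ^ 2) := by
        rw [mul_pow, mul_pow, hE1, hE2]; ring
      have h9 : 0 ≤ t1 * t4 * ((s2 + s3) ^ 2 - (s1 + s4) ^ 2) :=
        mul_nonneg hposE.le (by linarith)
      linarith [hdiff, h9]
    exact le_of_sq_le' (mul_nonneg (by nlinarith) (by linarith))
      (mul_nonneg (by nlinarith) (by linarith)) hsq
  unfold gFun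
  rw [← hs1def, ← hs2def, ← hs3def, ← hs4def, div_mul_div_comm, div_mul_div_comm,
    div_le_div_iff₀ (mul_pos (by linarith) (by linarith)) (mul_pos (by linarith) (by linarith))]
  have hid : (s1 - 1) * (s4 - 1) * ((s2 + 1) * (s3 + 1)) -
      (s2 - 1) * (s3 - 1) * ((s1 + 1) * (s4 + 1)) =
      2 * ((s1 * s4 + 1) * (s2 + s3) - (s2 * s3 + 1) * (s1 + s4)) := by ring
  linarith [hkey, hid]

/-- Core inequality of Lemma 1: matched ordering with the smaller multiplier dominates
the swapped ordering with the larger multiplier. -/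
theorem pairing_inequality_lemma1 (ν₁ ν₂ zi zj ap aq : ℝ)
    (hν₁ : 0 < ν₁) (hν : ν₁ ≤ ν₂) (hzi : 0 < zi) (hz : zi ≤ zj)
    (hap : 0 < ap) (ha : ap ≤ aq) :
    hFun zj ν₂ ap * hFun zi ν₂ aq ≤ hFun zi ν₁ ap * hFun zj ν₁ aq := by
  have hν₂ : 0 < ν₂ := lt_of_lt_of_le hν₁ hν
  have hzj : 0 < zj := lt_of_lt_of_le hzi hz
  have haq : 0 < aq := lt_of_lt_of_le hap ha
  rw [hFun_eq zj ν₂ ap hzj hν₂ hap, hFun_eq zi ν₂ aq hzi hν₂ haq,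
    hFun_eq zi ν₁ ap hzi hν₁ hap, hFun_eq zj ν₁ aq hzj hν₁ haq]
  have step1 : gFun (4 * ap / (ν₂ * zj)) * gFun (4 * aq / (ν₂ * zi)) ≤
      gFun (4 * ap / (ν₁ * zj)) * gFun (4 * aq / (ν₁ * zi)) := by
    have m1 : 4 * ap / (ν₂ * zj) ≤ 4 * ap / (ν₁ * zj) := by
      apply div_le_div_of_nonneg_left (by positivity) (by positivity)
      nlinarith
    have m2 : 4 * aq / (ν₂ * zi) ≤ 4 * aq / (ν₁ * zi) := by
      apply div_le_div_of_nonneg_left (by positivity) (by positivity)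
      nlinarith
    exact mul_le_mul (gFun_mono (by positivity) m1) (gFun_mono (by positivity) m2)
      (gFun_nonneg (by positivity)) (gFun_nonneg (by positivity))
  refine le_trans step1 ?_
  apply key_lemma
  · positivity
  · rw [div_le_div_iff₀ (by positivity) (by positivity)]
    nlinarith [mul_le_mul_of_nonneg_left hz (by positivity : (0:ℝ) ≤ 4 * ap * ν₁)]
  · rw [div_le_div_iff₀ (by positivity) (by positivity)]
    nlinarith [mul_le_mul_of_nonneg_right ha (by positivity : (0:ℝ) ≤ 4 * (ν₁ * zj))]
  · positivity
  · field_simp
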